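/- Define f_n(t) = (1 − t)^n · Σ_{j=0}^{n−1} t^j · C(n+j−1, j). Let K be a compact subset of {t ∈ ℂ : |t(1−t)| < 1/4 and Re(t) < 1/2}. Then f_n → 1 uniformly on K as n → ∞. Similarly, if K is a compact subset of {t ∈ ℂ : |t(1−t)| < 1/4 and Re(t) > 1/2}, then f_n → 0 uniformly on K. -/

import Mathlib

/-!
Pascal's rule gives `f_{m+2}(t) - f_{m+1}(t) = C(2m+1, m+1) (t(1-t))^(m+1) (1 - 2t)`, an increment
that changes sign under `t ↦ 1 - t`; since `f_1(t) + f_1(1-t) = 1`, this gives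
`f_n(t) + f_n(1-t) = 1` for all `n ≥ 1`, and the lobe `Re t < 1/2` is the mirror image of the
lobe `Re t > 1/2`. On the latter `|t| > 1/2`, and the crude bound `C(n-1+j, j) ≤ 2^(n-1+j)`
gives `|f_n(t)| ≤ n (4|t(1-t)|)^n`, which tends to `0` uniformly on compact sets, where
`4|t(1-t)|` stays below some `q < 1`.
-/

open Filter

/-- `f_n(t) = (1-t)^n ∑_{j=0}^{n-1} t^j C(n+j-1,j)`, the ensemble average polynomial
after the substitution `t = z/β`. -/
noncomputable def fEns (n : ℕ) (t : ℂ) : ℂ :=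
  (1 - t) ^ n * ∑ j ∈ Finset.range n, t ^ j * (Nat.choose (n + j - 1) j : ℂ)

open Finset

theorem one_sub_mul_sum_range_choose {R : Type*} [CommRing R] (m : ℕ) (t : R) :
    (1 - t) * ∑ j ∈ range (m + 2), ((m + 1 + j).choose j : R) * t ^ j =
      ∑ j ∈ range (m + 1), ((m + j).choose j : R) * t ^ j +
        ((2 * m + 1).choose (m + 1) : R) * t ^ (m + 1) * (1 - 2 * t) := by
  have pascal : ∑ j ∈ range (m + 2), ((m + 1 + j).choose j : R) * t ^ j =
      ∑ j ∈ range (m + 2), ((m + j).choose j : R) * t ^ j +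
        t * ∑ j ∈ range (m + 1), ((m + 1 + j).choose j : R) * t ^ j := by
    rw [sum_range_succ' (fun j => ((m + 1 + j).choose j : R) * t ^ j) (m + 1),
      sum_range_succ' (fun j => ((m + j).choose j : R) * t ^ j) (m + 1), Nat.add_zero, mul_sum,
      add_right_comm, ← sum_add_distrib]
    refine congrArg₂ (· + ·) (sum_congr rfl fun j _ => ?_) (by simp)
    rw [show m + 1 + (j + 1) = m + (j + 1) + 1 by omega, Nat.choose_succ_succ',
      show m + (j + 1) = m + 1 + j by omega]
    push_cast
    ring
  have central : ((m + 1 + (m + 1)).choose (m + 1) : R) =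
      2 * ((2 * m + 1).choose (m + 1) : R) := by
    rw [show m + 1 + (m + 1) = 2 * m + 1 + 1 by omega, Nat.choose_succ_succ',
      Nat.choose_symm_half]
    push_cast
    ring
  rw [sum_range_succ (fun j => ((m + j).choose j : R) * t ^ j),
    show m + (m + 1) = 2 * m + 1 by omega] at pascal
  rw [sum_range_succ, central] at pascal ⊢
  linear_combination pascal

theorem fEns_succ (n : ℕ) (t : ℂ) :
    fEns (n + 1) t = (1 - t) ^ (n + 1) * ∑ j ∈ range (n + 1), ((n + j).choose j : ℂ) * t ^ j := by
  simp only [fEns, add_right_comm n 1, Nat.add_sub_cancel, mul_comm]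

theorem fEns_add_two (m : ℕ) (t : ℂ) :
    fEns (m + 2) t =
      fEns (m + 1) t + ((2 * m + 1).choose (m + 1) : ℂ) * (t * (1 - t)) ^ (m + 1) * (1 - 2 * t) := by
  rw [fEns_succ (m + 1), fEns_succ m, pow_succ', mul_assoc, mul_left_comm,
    one_sub_mul_sum_range_choose, mul_pow]
  ring

theorem fEns_add_fEns_one_sub (m : ℕ) (t : ℂ) : fEns (m + 1) t + fEns (m + 1) (1 - t) = 1 := by
  induction m with
  | zero => simp [fEns]
  | succ m ih =>
    rw [fEns_add_two, fEns_add_two, sub_sub_cancel]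
    linear_combination ih

theorem norm_fEns_le (n : ℕ) {t : ℂ} (ht : 1 / 2 ≤ ‖t‖) :
    ‖fEns n t‖ ≤ n * (4 * ‖t * (1 - t)‖) ^ n := by
  obtain _ | m := n
  · simp [fEns]
  have term : ∀ j ∈ range (m + 1), ‖((m + j).choose j : ℂ) * t ^ j‖ ≤ (4 * ‖t‖) ^ (m + 1) := by
    intro j hj
    have hj : j ≤ m + 1 := (mem_range.mp hj).le
    calc ‖((m + j).choose j : ℂ) * t ^ j‖ = ((m + j).choose j : ℝ) * ‖t‖ ^ j := by
          rw [norm_mul, norm_pow, Complex.norm_natCast]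
      _ ≤ 2 ^ (m + j) * ‖t‖ ^ j := by gcongr; exact_mod_cast Nat.choose_le_two_pow _ _
      _ = 2 ^ m * (2 * ‖t‖) ^ j := by ring
      _ ≤ 2 ^ (m + 1) * (2 * ‖t‖) ^ (m + 1) := by gcongr <;> linarith
      _ = (4 * ‖t‖) ^ (m + 1) := by rw [← mul_pow, ← mul_assoc]; norm_num
  calc ‖fEns (m + 1) t‖
      = ‖1 - t‖ ^ (m + 1) * ‖∑ j ∈ range (m + 1), ((m + j).choose j : ℂ) * t ^ j‖ := by
        rw [fEns_succ, norm_mul, norm_pow]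
    _ ≤ ‖1 - t‖ ^ (m + 1) * ((m + 1) * (4 * ‖t‖) ^ (m + 1)) := by
        gcongr
        simpa using norm_sum_le_of_le _ term
    _ = (m + 1 : ℕ) * (4 * ‖t * (1 - t)‖) ^ (m + 1) := by
        rw [norm_mul]; push_cast; ring

theorem tendstoUniformlyOn_zero_of_norm_le_mul_pow {α E : Type*} [TopologicalSpace α]
    [SeminormedAddCommGroup E] {F : ℕ → α → E} {c : α → ℝ} {K : Set α} (hK : IsCompact K)
    (hc : ContinuousOn c K) (hc0 : ∀ x ∈ K, 0 ≤ c x) (hc1 : ∀ x ∈ K, c x < 1)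
    (hF : ∀ n, ∀ x ∈ K, ‖F n x‖ ≤ n * c x ^ n) : TendstoUniformlyOn F 0 atTop K := by
  rcases K.eq_empty_or_nonempty with rfl | hne
  · exact tendstoUniformlyOn_empty
  obtain ⟨x, hx, hmax⟩ := hK.exists_isMaxOn hne hc
  have hlim := tendsto_self_mul_const_pow_of_lt_one (hc0 x hx) (hc1 x hx)
  rw [Metric.tendstoUniformlyOn_iff]
  intro ε hε
  filter_upwards [hlim.eventually_lt_const hε] with n hn y hy
  calc dist ((0 : α → E) y) (F n y) = ‖F n y‖ := by simp
    _ ≤ n * c y ^ n := hF n y hy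
    _ ≤ n * c x ^ n := by gcongr; exacts [hc0 y hy, hmax hy]
    _ < ε := hn

theorem tendstoUniformlyOn_fEns_zero {K : Set ℂ} (hK : IsCompact K)
    (hsub : K ⊆ {t : ℂ | ‖t * (1 - t)‖ < 1 / 4 ∧ 1 / 2 < t.re}) :
    TendstoUniformlyOn fEns 0 atTop K :=
  tendstoUniformlyOn_zero_of_norm_le_mul_pow hK (c := fun t => 4 * ‖t * (1 - t)‖)
    (by fun_prop) (fun _ _ => by positivity) (fun t ht => by linarith [(hsub ht).1])
    fun n t ht => norm_fEns_le n ((hsub ht).2.le.trans (Complex.re_le_norm t))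

theorem tendstoUniformlyOn_fEns_one {K : Set ℂ} (hK : IsCompact K)
    (hsub : K ⊆ {t : ℂ | ‖t * (1 - t)‖ < 1 / 4 ∧ t.re < 1 / 2}) :
    TendstoUniformlyOn fEns 1 atTop K := by
  have hmirror : (1 - ·) '' K ⊆ {t : ℂ | ‖t * (1 - t)‖ < 1 / 4 ∧ 1 / 2 < t.re} := by
    rintro _ ⟨t, ht, rfl⟩
    refine ⟨by simpa [mul_comm] using (hsub ht).1, ?_⟩
    show 1 / 2 < (1 - t).re
    rw [Complex.sub_re, Complex.one_re]
    linarith [(hsub ht).2]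
  have hzero : TendstoUniformlyOn (fun n t => fEns n (1 - t)) 0 atTop K :=
    ((tendstoUniformlyOn_fEns_zero (hK.image (by fun_prop)) hmirror).comp (1 - ·)).mono
      (Set.subset_preimage_image _ K)
  have hone : TendstoUniformlyOn (fun n t => 1 - fEns n (1 - t)) (1 - 0) atTop K :=
    (tendsto_const_nhds.tendstoUniformlyOn_const K).sub hzero
  refine (hone.congr ?_).congr_right (by simp [Set.EqOn])
  filter_upwards [eventually_ne_atTop 0] with n hn t _
  obtain ⟨m, rfl⟩ := Nat.exists_eq_add_one_of_ne_zero hn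
  exact sub_eq_of_eq_add (fEns_add_fEns_one_sub m t).symm

/-- Uniform convergence on compact subsets of each lobe of the convergence region:
`f_n → 1` uniformly on compact subsets of `{|t(1-t)| < 1/4, Re t < 1/2}` and
`f_n → 0` uniformly on compact subsets of `{|t(1-t)| < 1/4, Re t > 1/2}`. -/
theorem fEns_uniform_convergence (K : Set ℂ) (hK : IsCompact K) :
    (K ⊆ {t : ℂ | ‖t * (1 - t)‖ < 1 / 4 ∧ t.re < 1 / 2} →
      TendstoUniformlyOn (fun n : ℕ => fun t : ℂ => fEns n t) (fun _ => 1) atTop K) ∧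
    (K ⊆ {t : ℂ | ‖t * (1 - t)‖ < 1 / 4 ∧ 1 / 2 < t.re} →
      TendstoUniformlyOn (fun n : ℕ => fun t : ℂ => fEns n t) (fun _ => 0) atTop K) :=
  ⟨tendstoUniformlyOn_fEns_one hK, tendstoUniformlyOn_fEns_zero hK⟩
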